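/- arXiv:1208.1749 — 5 statements merged into one kernel-verified Lean document; each statement's English description precedes it below -/
import Mathlib

section
/- Let L : P → C be a reflective localization of a category P onto a full subcategory C, with right adjoint inclusion G and unit η. Suppose L is locally cartesian, i.e., for every morphism f : T → S between objects of C, pullback along f preserves L-local equivalences. Then for every morphism f : T → S in C, the functor f_* : P/T → P/S (right adjoint to pullback) sends L-local objects over T to L-local objects over S. -/
/-!
Write `η`, `ε` for the unit and counit of `L ⊣ G`. Over `G S`, the map `η : X ⟶ G (L X)` is a
morphism from `p : X ⟶ G S` to its reflection `G (L p ≫ ε)`, natural in `p`. Its pullback along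
`G f` is again an `L`-equivalence: by pasting, it is the base change of `η_X` along `G` of the
projection `L X ×_S T ⟶ L X` (`G` preserves pullbacks), so local cartesianness applies.
Naturality and two-out-of-three then show that pullback along `G f` preserves all local
equivalences over `G S`, and a right adjoint of a functor preserving local equivalences
preserves local objects.
-/

open CategoryTheory CategoryTheory.Limits

/-- An object `z` of the slice `P/S` is local (with respect to the reflector `L`) if maps
into it invert `L`-local equivalences over `S`. -/
def IsLocalObj {P C : Type*} [Category P] [Category C] (L : P ⥤ C)
    {S : P} (z : Over S) : Prop :=
  ∀ (p p' : Over S) (α : p ⟶ p'), IsIso (L.map α.left) →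
    Function.Bijective (fun g : p' ⟶ z => α ≫ g)

section

variable {P C : Type*} [Category P] [Category C]

def IsLocallyCartesian (L : P ⥤ C) (G : C ⥤ P) : Prop :=
  ∀ {T S : C} (f : T ⟶ S) {X Y : P} (p : X ⟶ G.obj S) (p' : Y ⟶ G.obj T) (q : Y ⟶ X),
    IsPullback q p' p (G.map f) → IsIso (L.map p) → IsIso (L.map p')

variable {L : P ⥤ C} {G : C ⥤ P}

lemma IsLocalObj.of_adjunction {A B : P} {F : Over A ⥤ Over B} {R : Over B ⥤ Over A}
    (h : F ⊣ R)
    (hF : ∀ ⦃p p' : Over A⦄ (α : p ⟶ p'),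
      IsIso (L.map α.left) → IsIso (L.map (F.map α).left))
    {z : Over B} (hz : IsLocalObj L z) : IsLocalObj L (R.obj z) := by
  intro p p' α hα
  have hcomp : (fun g : p' ⟶ R.obj z => α ≫ g) =
      h.homEquiv p z ∘ (fun k => F.map α ≫ k) ∘ (h.homEquiv p' z).symm := by
    funext g
    simp [h.homEquiv_naturality_left]
  rw [hcomp]
  exact (h.homEquiv p z).bijective.comp
    ((hz _ _ _ (hF α hα)).comp (h.homEquiv p' z).symm.bijective)

lemma CategoryTheory.Adjunction.hasPullback_of_full_of_faithful (adj : L ⊣ G) [G.Full]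
    [G.Faithful] [HasPullbacks P] {A B S : C} (u : A ⟶ S) (v : B ⟶ S) : HasPullback u v :=
  let _ : Reflective G := { L := L, adj := adj }
  hasLimit_of_reflective _ G

lemma isIso_map_pullback_map_postAdjunctionRight_unit (adj : L ⊣ G) [G.Full] [G.Faithful]
    [HasPullbacks P] (hloc : IsLocallyCartesian L G) {T S : C} (f : T ⟶ S) (p : Over (G.obj S)) :
    IsIso (L.map ((Over.pullback (G.map f)).map
      ((Over.postAdjunctionRight adj).unit.app p)).left) := by
  set pbar : L.obj p.left ⟶ S := L.map p.hom ≫ adj.counit.app S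
  have := adj.hasPullback_of_full_of_faithful pbar f
  have : G.IsRightAdjoint := ⟨_, ⟨adj⟩⟩
  have hG := (IsPullback.of_hasPullback pbar f).map G
  set σ : pullback p.hom (G.map f) ⟶ pullback (G.map pbar) (G.map f) :=
    ((Over.pullback (G.map f)).map ((Over.postAdjunctionRight adj).unit.app p)).left
  have hσ : σ = pullback.lift (pullback.fst p.hom (G.map f) ≫ adj.unit.app p.left)
      (pullback.snd p.hom (G.map f)) (by simp [pbar, pullback.condition]) := rfl
  set e := (IsPullback.of_hasPullback (G.map pbar) (G.map f)).isoIsPullback _ _ hG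
  have hsq : IsPullback (σ ≫ e.hom) (pullback.fst p.hom (G.map f)) (G.map (pullback.fst pbar f))
      (adj.unit.app p.left) := by
    refine IsPullback.of_right ?_ ?_ hG.flip
    · have hsnd : (σ ≫ e.hom) ≫ G.map (pullback.snd pbar f) =
          pullback.snd p.hom (G.map f) := by
        simp only [hσ, e, Category.assoc, IsPullback.isoIsPullback_hom_snd]
        exact pullback.lift_snd _ _ _
      have hfactor : adj.unit.app p.left ≫ G.map pbar = p.hom := by simp [pbar]
      rw [hsnd, hfactor]
      exact (IsPullback.of_hasPullback _ _).flip
    · simp only [hσ, e, Category.assoc, IsPullback.isoIsPullback_hom_fst]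
      exact pullback.lift_fst _ _ _
  have : IsIso (L.map σ ≫ L.map e.hom) := by
    rw [← L.map_comp]
    exact hloc _ _ _ _ hsq.flip inferInstance
  exact IsIso.of_isIso_comp_right (L.map σ) (L.map e.hom)

lemma isIso_map_pullback_map (adj : L ⊣ G) [G.Full] [G.Faithful] [HasPullbacks P]
    (hloc : IsLocallyCartesian L G) {T S : C} (f : T ⟶ S) {p p' : Over (G.obj S)}
    (α : p ⟶ p') (hα : IsIso (L.map α.left)) :
    IsIso (L.map ((Over.pullback (G.map f)).map α).left) := by
  let Φ := Over.pullback (G.map f) ⋙ Over.forget _ ⋙ L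
  let η := (Over.postAdjunctionRight (Y := S) adj).unit
  have hnat : Φ.map α ≫ Φ.map (η.app p') = Φ.map (η.app p) ≫
      Φ.map ((Over.post G).map ((Over.map (adj.counit.app S)).map ((Over.post L).map α))) := by
    rw [← Φ.map_comp, ← Φ.map_comp]
    exact congrArg Φ.map (η.naturality α)
  have : IsIso ((Over.post L).map α) := by
    have : IsIso ((Over.forget _).map ((Over.post L).map α)) := hα
    exact isIso_of_reflects_iso _ (Over.forget _)
  have : IsIso (Φ.map (η.app p)) := isIso_map_pullback_map_postAdjunctionRight_unit adj hloc f p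
  have : IsIso (Φ.map (η.app p')) := isIso_map_pullback_map_postAdjunctionRight_unit adj hloc f p'
  have : IsIso (Φ.map α ≫ Φ.map (η.app p')) := by
    rw [hnat]
    infer_instance
  exact IsIso.of_isIso_comp_right (Φ.map α) (Φ.map (η.app p'))

end

/-- Let `L : P ⥤ C` be a reflective localization (fully faithful right adjoint inclusion `G`)
which is locally cartesian: for every morphism `f : T ⟶ S` in `C`, pullback along `f`
preserves `L`-local equivalences.  Then for every `f : T ⟶ S` in `C`, any right adjoint
`f_* : P/T ⥤ P/S` of pullback along `f` sends local objects over `T` to local objects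
over `S`. -/
theorem pushforward_preserves_local {P C : Type*} [Category P] [Category C] [HasPullbacks P]
    (L : P ⥤ C) (G : C ⥤ P) (adj : L ⊣ G) [G.Full] [G.Faithful]
    (hloc : ∀ {T S : C} (f : T ⟶ S) {X Y : P}
      (p : X ⟶ G.obj S) (p' : Y ⟶ G.obj T) (q : Y ⟶ X),
      IsPullback q p' p (G.map f) → IsIso (L.map p) → IsIso (L.map p'))
    {T S : C} (f : T ⟶ S) (fstar : Over (G.obj T) ⥤ Over (G.obj S))
    (fadj : Over.pullback (G.map f) ⊣ fstar)
    (z : Over (G.obj T)) (hz : IsLocalObj L z) :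
    IsLocalObj L (fstar.obj z) :=
  hz.of_adjunction fadj fun _ _ => isIso_map_pullback_map adj hloc f
end

section
/- Let P be a locally cartesian closed category and L : P → C a locally cartesian reflective localization with fully faithful right adjoint G and unit η. Then for each object T of P, the composite functor η_T* ∘ G_{LT} : C/LT → P/GLT → P/T is fully faithful and right adjoint to the composite (η_T)_! ∘ L_{LT} : P/T → P/GLT → C/LT. -/
/-!
The adjunction is the composite of `(η_T)_! ⊣ η_T*` with the adjunction on slices induced by
`L ⊣ G`. Its counit at `Z → LT` is `L(T ×_{GLT} GZ) → LGZ → Z`: the image under `L` of the pullback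
of `η_T` along `GZ → GLT`, followed by the counit of `L ⊣ G`. As `G` is fully faithful, `L η_T` and
the counit of `L ⊣ G` are invertible, and the localization hypothesis says that `L` still inverts
the pullback of `η_T`. So the counit is an isomorphism, and the right adjoint is fully faithful.
-/

open CategoryTheory CategoryTheory.Limits

namespace CategoryTheory.Adjunction

variable {P C : Type*} [Category P] [Category C] [HasPullbacks P] {L : P ⥤ C} {G : C ⥤ P}

/-- `(η_T)_! ⋙ L_{LT} ⊣ G_{LT} ⋙ η_T*`, where `L_{LT}` is `L` on slices followed by `ε_{LT}`. -/
noncomputable def overPostPullbackUnit (adj : L ⊣ G) (T : P) :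
    Over.map (adj.unit.app T) ⋙ Over.post L ⋙ Over.map (adj.counit.app (L.obj T)) ⊣
      Over.post G ⋙ Over.pullback (adj.unit.app T) :=
  (Over.mapPullbackAdj (adj.unit.app T)).comp (Over.postAdjunctionRight adj)

lemma overPostPullbackUnit_counit_app_left (adj : L ⊣ G) (T : P) (Z : Over (L.obj T)) :
    ((adj.overPostPullbackUnit T).counit.app Z).left =
      L.map (pullback.fst (G.map Z.hom) (adj.unit.app T)) ≫ adj.counit.app Z.left := by
  simp only [overPostPullbackUnit, Adjunction.comp_counit_app, Over.comp_left,
    Over.mapPullbackAdj_counit_app, Functor.comp_map]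
  rfl

lemma isIso_overPostPullbackUnit_counit [G.Full] [G.Faithful] (adj : L ⊣ G) (T : P)
    (h : ∀ Z : Over (L.obj T), IsIso (L.map (pullback.fst (G.map Z.hom) (adj.unit.app T)))) :
    IsIso (adj.overPostPullbackUnit T).counit := by
  rw [NatTrans.isIso_iff_isIso_app]
  intro Z
  have : IsIso ((Over.forget _).map ((adj.overPostPullbackUnit T).counit.app Z)) := by
    rw [Over.forget_map, overPostPullbackUnit_counit_app_left]
    exact IsIso.comp_isIso' (h Z) (inferInstanceAs (IsIso (adj.counit.app Z.left)))
  exact isIso_of_reflects_iso _ (Over.forget _)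

end CategoryTheory.Adjunction

/-- Slice adjunction lemma: for a locally cartesian reflective localization `L : P ⥤ C`
(fully faithful inclusion `G`, unit `η`) of a category with pullbacks, and any `T : P`, the
composite `C/LT ⥤ P/GLT ⥤ P/T` (the induced functor `G` on slices followed by pullback
along `η_T`) is fully faithful and right adjoint to the composite
`P/T ⥤ P/GLT ⥤ C/LT` (postcomposition with `η_T` followed by the induced localization on
slices). -/
theorem slice_adjunction {P C : Type*} [Category P] [Category C] [HasPullbacks P]
    (L : P ⥤ C) (G : C ⥤ P) (adj : L ⊣ G) [G.Full] [G.Faithful]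
    (hloc : ∀ {T S : C} (f : T ⟶ S) {X Y : P}
      (p : X ⟶ G.obj S) (p' : Y ⟶ G.obj T) (q : Y ⟶ X),
      IsPullback q p' p (G.map f) → IsIso (L.map p) → IsIso (L.map p'))
    (T : P) :
    (Over.post G ⋙ Over.pullback (adj.unit.app T) :
        Over (L.obj T) ⥤ Over T).Full ∧
    (Over.post G ⋙ Over.pullback (adj.unit.app T) :
        Over (L.obj T) ⥤ Over T).Faithful ∧
    Nonempty ((Over.map (adj.unit.app T) ⋙ Over.post L ⋙
        Over.map (adj.counit.app (L.obj T)) : Over T ⥤ Over (L.obj T)) ⊣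
      (Over.post G ⋙ Over.pullback (adj.unit.app T))) := by
  have hfst (Z : Over (L.obj T)) :
      IsIso (L.map (pullback.fst (G.map Z.hom) (adj.unit.app T))) :=
    hloc Z.hom (adj.unit.app T) _ _ (IsPullback.of_hasPullback _ _).flip inferInstance
  have := adj.isIso_overPostPullbackUnit_counit T hfst
  let ff := (adj.overPostPullbackUnit T).fullyFaithfulROfIsIsoCounit
  exact ⟨ff.full, ff.faithful, ⟨adj.overPostPullbackUnit T⟩⟩
end

section
/- Let M be a model category in which the cofibrations are exactly the monomorphisms. If for every fibration f : T → S between fibrant objects the pullback functor f* : M/S → M/T preserves trivial cofibrations, then M is right proper, i.e., the pullback of any weak equivalence along any fibration is a weak equivalence. -/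
open CategoryTheory CategoryTheory.Limits

variable {M : Type*} [Category M]

/-- `f` is a retract of `g` in the arrow category. -/
def IsRetractOfArrow {X Y X' Y' : M} (f : X ⟶ Y) (g : X' ⟶ Y') : Prop :=
  ∃ (a : X ⟶ X') (b : X' ⟶ X) (c : Y ⟶ Y') (d : Y' ⟶ Y),
    a ≫ b = 𝟙 X ∧ c ≫ d = 𝟙 Y ∧ a ≫ g = f ≫ c ∧ g ≫ d = b ≫ f

/-- A model structure on a (complete and cocomplete) category `M`: classes of weak
equivalences, cofibrations and fibrations, satisfying two-out-of-three, closure under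
retracts, the lifting axioms and the factorization axioms. -/
structure ModelStructure (M : Type*) [Category M] where
  W : MorphismProperty M
  Cof : MorphismProperty M
  Fib : MorphismProperty M
  w_of_isIso : ∀ {X Y : M} (f : X ⟶ Y), IsIso f → W f
  w_comp : ∀ {X Y Z : M} (f : X ⟶ Y) (g : Y ⟶ Z), W f → W g → W (f ≫ g)
  w_of_comp_right : ∀ {X Y Z : M} (f : X ⟶ Y) (g : Y ⟶ Z), W (f ≫ g) → W f → W g
  w_of_comp_left : ∀ {X Y Z : M} (f : X ⟶ Y) (g : Y ⟶ Z), W (f ≫ g) → W g → W f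
  w_retract : ∀ {X Y X' Y' : M} (f : X ⟶ Y) (g : X' ⟶ Y'),
    IsRetractOfArrow f g → W g → W f
  cof_retract : ∀ {X Y X' Y' : M} (f : X ⟶ Y) (g : X' ⟶ Y'),
    IsRetractOfArrow f g → Cof g → Cof f
  fib_retract : ∀ {X Y X' Y' : M} (f : X ⟶ Y) (g : X' ⟶ Y'),
    IsRetractOfArrow f g → Fib g → Fib f
  lift_trivCof_fib : ∀ {A B X Y : M} (i : A ⟶ B) (p : X ⟶ Y),
    Cof i → W i → Fib p → HasLiftingProperty i p
  lift_cof_trivFib : ∀ {A B X Y : M} (i : A ⟶ B) (p : X ⟶ Y),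
    Cof i → Fib p → W p → HasLiftingProperty i p
  factor₁ : ∀ {X Y : M} (f : X ⟶ Y),
    ∃ (Z : M) (i : X ⟶ Z) (p : Z ⟶ Y), Cof i ∧ W i ∧ Fib p ∧ i ≫ p = f
  factor₂ : ∀ {X Y : M} (f : X ⟶ Y),
    ∃ (Z : M) (i : X ⟶ Z) (p : Z ⟶ Y), Cof i ∧ Fib p ∧ W p ∧ i ≫ p = f

/-
Factor the weak equivalence as a cofibration `i` followed by a trivial fibration; pullbacks
of trivial fibrations are trivial fibrations, so only the pullback of the trivial
cofibration `i : A ⟶ B` along a fibration `p : X ⟶ B` remains. Replace `B` by a fibrant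
`j : B ⟶ B'` and `p ≫ j` by a fibration `r : T ⟶ B'` through a trivial cofibration
`l : X ⟶ T`. The hypothesis makes `B ×_{B'} T ⟶ T` and `A ×_{B'} T ⟶ B ×_{B'} T` weak
equivalences, so `X ⟶ B ×_{B'} T` is a trivial cofibration (a monomorphism since `l` is)
over `B`, hence has a retraction over `B` because `p` is a fibration. Pulling back along
`i` exhibits `A ×_B X ⟶ X` as a retract of `A ×_{B'} T ⟶ B ×_{B'} T`.
-/

lemma isRetractOfArrow_of_isPullback {X' X Y' Y A B : M} {w' : X' ⟶ X} {q : X' ⟶ A}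
    {p : X ⟶ B} {i : A ⟶ B} {g : Y' ⟶ Y} {q₂ : Y' ⟶ A} {p₂ : Y ⟶ B}
    (h : IsPullback w' q p i) (h₂ : IsPullback g q₂ p₂ i) (v : X ⟶ Y) (ρ : Y ⟶ X)
    (hvρ : v ≫ ρ = 𝟙 X) (hv : v ≫ p₂ = p) (hρ : ρ ≫ p = p₂) : IsRetractOfArrow w' g := by
  let u : X' ⟶ Y' := h₂.lift (w' ≫ v) q (by rw [Category.assoc, hv, h.w])
  let b : Y' ⟶ X' := h.lift (g ≫ ρ) q₂ (by rw [Category.assoc, hρ, h₂.w])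
  refine ⟨u, b, v, ρ, ?_, hvρ, h₂.lift_fst _ _ _, (h.lift_fst _ _ _).symm⟩
  apply h.hom_ext
  · rw [Category.assoc, h.lift_fst, h₂.lift_fst_assoc, Category.assoc, hvρ, Category.comp_id,
      Category.id_comp]
  · rw [Category.assoc, h.lift_snd, h₂.lift_snd, Category.id_comp]

namespace ModelStructure

variable (S : ModelStructure M)

def IsFibrant [HasTerminal M] (X : M) : Prop := S.Fib (terminal.from X)

def PullbackPreservesTrivCof [HasLimits M] : Prop :=
  ∀ {T B : M} (f : T ⟶ B), S.Fib f → S.IsFibrant T → S.IsFibrant B →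
    ∀ {x y : Over B} (i : x ⟶ y), S.Cof i.left → S.W i.left →
      S.Cof (((Over.pullback f).map i).left) ∧ S.W (((Over.pullback f).map i).left)

lemma fib_of_rlp {X Y : M} (f : X ⟶ Y)
    (h : ∀ {C D : M} (k : C ⟶ D), S.Cof k → S.W k → HasLiftingProperty k f) :
    S.Fib f := by
  obtain ⟨Z, i, p, hc, hw, hf, hip⟩ := S.factor₁ f
  have := h i hc hw
  have sq : CommSq (𝟙 X) i f p := ⟨by simp [hip]⟩
  exact S.fib_retract f p
    ⟨i, sq.lift, 𝟙 Y, 𝟙 Y, sq.fac_left, by simp, by simp [hip], by simp⟩ hf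

lemma w_of_rlp {X Y : M} (f : X ⟶ Y)
    (h : ∀ {C D : M} (k : C ⟶ D), S.Cof k → HasLiftingProperty k f) :
    S.W f := by
  obtain ⟨Z, i, p, hc, hf, hw, hip⟩ := S.factor₂ f
  have := h i hc
  have sq : CommSq (𝟙 X) i f p := ⟨by simp [hip]⟩
  exact S.w_retract f p
    ⟨i, sq.lift, 𝟙 Y, 𝟙 Y, sq.fac_left, by simp, by simp [hip], by simp⟩ hw

lemma fib_comp {X Y Z : M} {f : X ⟶ Y} {g : Y ⟶ Z} (hf : S.Fib f) (hg : S.Fib g) :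
    S.Fib (f ≫ g) :=
  S.fib_of_rlp _ fun k hc hw =>
    have := S.lift_trivCof_fib k f hc hw hf
    have := S.lift_trivCof_fib k g hc hw hg
    inferInstance

lemma fib_of_isPullback {P X Y Z : M} {fst : P ⟶ X} {snd : P ⟶ Y} {f : X ⟶ Z} {g : Y ⟶ Z}
    (h : IsPullback fst snd f g) (hf : S.Fib f) : S.Fib snd :=
  S.fib_of_rlp _ fun k hc hw =>
    have := S.lift_trivCof_fib k f hc hw hf
    h.hasLiftingProperty k

lemma w_of_isPullback_of_trivFib {P X Y Z : M} {fst : P ⟶ X} {snd : P ⟶ Y} {f : X ⟶ Z}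
    {g : Y ⟶ Z} (h : IsPullback fst snd f g) (hg : S.Fib g) (hgw : S.W g) : S.W fst :=
  S.w_of_rlp _ fun k hc =>
    have := S.lift_cof_trivFib k g hc hg hgw
    h.flip.hasLiftingProperty k

lemma exists_retraction_of_trivCof {X Y B : M} {v : X ⟶ Y} {p : X ⟶ B} {p₂ : Y ⟶ B}
    (hv : v ≫ p₂ = p) (hc : S.Cof v) (hw : S.W v) (hp : S.Fib p) :
    ∃ ρ : Y ⟶ X, v ≫ ρ = 𝟙 X ∧ ρ ≫ p = p₂ := by
  have := S.lift_trivCof_fib v p hc hw hp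
  have sq : CommSq (𝟙 X) v p p₂ := ⟨by simp [hv]⟩
  exact ⟨sq.lift, sq.fac_left, sq.fac_right⟩

section

variable [HasLimits M]

lemma exists_trivCof_isFibrant (X : M) :
    ∃ (X' : M) (j : X ⟶ X'), S.Cof j ∧ S.W j ∧ S.IsFibrant X' := by
  obtain ⟨X', j, p, hc, hw, hf, -⟩ := S.factor₁ (terminal.from X)
  exact ⟨X', j, hc, hw, by rwa [IsFibrant, Subsingleton.elim (terminal.from X') p]⟩

variable {S}

lemma IsFibrant.of_fib {X Y : M} {f : X ⟶ Y} (hf : S.Fib f) (hY : S.IsFibrant Y) :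
    S.IsFibrant X := by
  rw [IsFibrant, Subsingleton.elim (terminal.from X) (f ≫ terminal.from Y)]
  exact S.fib_comp hf hY

lemma PullbackPreservesTrivCof.w_pullback_map (hyp : S.PullbackPreservesTrivCof)
    {T B : M} {r : T ⟶ B} (hr : S.Fib r) (hT : S.IsFibrant T) (hB : S.IsFibrant B)
    {C D : M} {a : C ⟶ B} {b : D ⟶ B} (k : C ⟶ D) (hk : k ≫ b = a) (hc : S.Cof k)
    (hw : S.W k) :
    S.W (pullback.map a r b r k (𝟙 T) (𝟙 B) (by simp [hk]) (by simp)) := by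
  subst hk
  have hmap : ((Over.pullback r).map (Over.homMk k : Over.mk (k ≫ b) ⟶ Over.mk b)).left =
      pullback.map (k ≫ b) r b r k (𝟙 T) (𝟙 B) (by simp) (by simp) := by
    apply pullback.hom_ext <;> simp [pullback.lift_fst, pullback.lift_snd]
  exact hmap ▸ (hyp r hr hT hB _ hc hw).2

lemma PullbackPreservesTrivCof.w_pullback_snd (hyp : S.PullbackPreservesTrivCof)
    {T B : M} {r : T ⟶ B} (hr : S.Fib r) (hT : S.IsFibrant T) (hB : S.IsFibrant B)
    {D : M} {j : D ⟶ B} (hc : S.Cof j) (hw : S.W j) : S.W (pullback.snd j r) := by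
  have : pullback.snd j r =
      pullback.map j r (𝟙 B) r j (𝟙 T) (𝟙 B) (by simp) (by simp) ≫ pullback.snd (𝟙 B) r := by
    simp [pullback.lift_snd]
  rw [this]
  exact S.w_comp _ _ (hyp.w_pullback_map hr hT hB j (Category.comp_id j) hc hw)
    (S.w_of_isIso _ inferInstance)

lemma PullbackPreservesTrivCof.w_of_isPullback_of_trivCof
    (hcof : S.Cof = MorphismProperty.monomorphisms M) (hyp : S.PullbackPreservesTrivCof)
    {X' A X B : M} {w' : X' ⟶ X} {q : X' ⟶ A} {p : X ⟶ B} {i : A ⟶ B}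
    (h : IsPullback w' q p i) (hci : S.Cof i) (hwi : S.W i) (hp : S.Fib p) : S.W w' := by
  obtain ⟨B', j, hcj, hwj, hB'⟩ := S.exists_trivCof_isFibrant B
  obtain ⟨T, l, r, hcl, hwl, hr, hlr⟩ := S.factor₁ (p ≫ j)
  have hT : S.IsFibrant T := hB'.of_fib hr
  let v : X ⟶ pullback j r := pullback.lift p l hlr.symm
  have hwv : S.W v := S.w_of_comp_left v (pullback.snd j r) (by rwa [pullback.lift_snd])
    (hyp.w_pullback_snd hr hT hB' hcj hwj)
  have hcv : S.Cof v := by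
    rw [hcof] at hcl ⊢
    have : Mono l := hcl
    exact mono_of_mono_fac (pullback.lift_snd p l hlr.symm)
  obtain ⟨ρ, hvρ, hρ⟩ := S.exists_retraction_of_trivCof (pullback.lift_fst p l _) hcv hwv hp
  have hg : IsPullback (pullback.map (i ≫ j) r j r i (𝟙 T) (𝟙 B') (by simp) (by simp))
      (pullback.fst (i ≫ j) r) (pullback.fst j r) i :=
    IsPullback.of_right
      (by simpa [pullback.lift_snd] using (IsPullback.of_hasPullback (i ≫ j) r).flip)
      (pullback.lift_fst _ _ _) (IsPullback.of_hasPullback j r).flip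
  exact S.w_retract w' _
    (isRetractOfArrow_of_isPullback h hg v ρ hvρ (pullback.lift_fst _ _ _) hρ)
    (hyp.w_pullback_map hr hT hB' i rfl hci hwi)

end

end ModelStructure

theorem right_proper_of_pullback_preserves_trivCof_general
    {M : Type*} [Category M] [HasLimits M] (S : ModelStructure M)
    (hcof : S.Cof = MorphismProperty.monomorphisms M)
    (hyp : ∀ {T B : M} (f : T ⟶ B), S.Fib f →
      S.Fib (terminal.from T) → S.Fib (terminal.from B) →
      ∀ {x y : Over B} (i : x ⟶ y), S.Cof i.left → S.W i.left →
        S.Cof (((Over.pullback f).map i).left) ∧ S.W (((Over.pullback f).map i).left)) :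
    ∀ {A B X X' : M} (w : A ⟶ B) (p : X ⟶ B) (w' : X' ⟶ X) (q : X' ⟶ A),
      IsPullback w' q p w → S.W w → S.Fib p → S.W w' := by
  intro A B X X' w p w' q h hw hp
  obtain ⟨Z, i, t, hci, hft, hwt, rfl⟩ := S.factor₂ w
  have hwi : S.W i := S.w_of_comp_left i t hw hwt
  let m : X' ⟶ pullback p t := pullback.lift w' (q ≫ i) (by simp [h.w])
  have hm : IsPullback m q (pullback.snd p t) i :=
    IsPullback.of_right (by rwa [pullback.lift_fst]) (pullback.lift_snd _ _ _)
      (IsPullback.of_hasPullback p t)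
  have hwm : S.W m :=
    ModelStructure.PullbackPreservesTrivCof.w_of_isPullback_of_trivCof hcof hyp hm hci hwi
      (S.fib_of_isPullback (IsPullback.of_hasPullback p t) hp)
  have hwfst : S.W (pullback.fst p t) :=
    S.w_of_isPullback_of_trivFib (IsPullback.of_hasPullback p t) hft hwt
  rw [show w' = m ≫ pullback.fst p t from (pullback.lift_fst _ _ _).symm]
  exact S.w_comp m _ hwm hwfst

/-- Let `M` be a model category in which the cofibrations are exactly the monomorphisms.
If for every fibration `f : T ⟶ S` between fibrant objects the pullback functor
`f^* : M/S ⥤ M/T` preserves trivial cofibrations, then `M` is right proper: the pullback of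
any weak equivalence along any fibration is a weak equivalence. -/
theorem right_proper_of_pullback_preserves_trivCof
    {M : Type*} [Category M] [HasLimits M] [HasColimits M] (S : ModelStructure M)
    (hcof : S.Cof = MorphismProperty.monomorphisms M)
    (hyp : ∀ {T B : M} (f : T ⟶ B), S.Fib f →
      S.Fib (terminal.from T) → S.Fib (terminal.from B) →
      ∀ {x y : Over B} (i : x ⟶ y), S.Cof i.left → S.W i.left →
        S.Cof (((Over.pullback f).map i).left) ∧ S.W (((Over.pullback f).map i).left)) :
    ∀ {A B X X' : M} (w : A ⟶ B) (p : X ⟶ B) (w' : X' ⟶ X) (q : X' ⟶ A),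
      IsPullback w' q p w → S.W w → S.Fib p → S.W w' :=
  right_proper_of_pullback_preserves_trivCof_general S hcof hyp
end

section
/- Let L : P → C be a reflective localization of a cartesian closed category with stable units, meaning that L inverts every pullback of any unit component η_X : X → LX. Then L preserves all pullback squares whose cospan vertex lies in C: for any cospan B → LX ← A in P with LX local, the canonical map L(B ×_{LX} A) → L(B) ×_{LX} L(A) is an isomorphism. -/
open CategoryTheory CategoryTheory.Limits

/-- Let `L : P ⥤ C` be a reflective localization (fully faithful inclusion `G`, unit `η`)
with stable units: `L` inverts every pullback of any unit component `η_X : X ⟶ GLX`.  Then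
`L` preserves all pullback squares whose cospan vertex lies in `C`: for any cospan
`B ⟶ G Z ⟵ A` in `P`, the canonical comparison map
`L(B ×_{GZ} A) ⟶ L(B) ×_{L(GZ)} L(A)` is an isomorphism. -/
theorem stableUnits_preserves_pullbacks_over_local
    {P C : Type*} [Category P] [Category C] [HasPullbacks P] [HasPullbacks C]
    (L : P ⥤ C) (G : C ⥤ P) (adj : L ⊣ G) [G.Full] [G.Faithful]
    (hstable : ∀ {X A W : P} (f : A ⟶ G.obj (L.obj X)) (t : W ⟶ A) (w : W ⟶ X),
      IsPullback t w f (adj.unit.app X) → IsIso (L.map t))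
    {A B : P} {Z : C} (g : B ⟶ G.obj Z) (p : A ⟶ G.obj Z) :
    IsIso (pullbackComparison L g p) := by
  haveI := adj.rightAdjoint_preservesLimits
  -- adjoint transposes of the cospan legs
  set g' : L.obj B ⟶ Z := (adj.homEquiv B Z).symm g with hg'
  set p' : L.obj A ⟶ Z := (adj.homEquiv A Z).symm p with hp'
  have hg : adj.unit.app B ≫ G.map g' = g := by
    have := (adj.homEquiv B Z).apply_symm_apply g
    rwa [adj.homEquiv_unit] at this
  have hp : adj.unit.app A ≫ G.map p' = p := by
    have := (adj.homEquiv A Z).apply_symm_apply p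
    rwa [adj.homEquiv_unit] at this
  have hg2 : g' = L.map g ≫ adj.counit.app Z := by rw [hg', adj.homEquiv_counit]
  have hp2 : p' = L.map p ≫ adj.counit.app Z := by rw [hp', adj.homEquiv_counit]
  -- the pullback in `C` and its image under `G`
  set Q := pullback g' p' with hQ
  set q1 := pullback.fst g' p' with hq1
  set q2 := pullback.snd g' p' with hq2
  have S0 : IsPullback q1 q2 g' p' := IsPullback.of_hasPullback g' p'
  have S0G : IsPullback (G.map q1) (G.map q2) (G.map g') (G.map p') := G.map_isPullback S0
  -- pullback of the unit of `B` along `G q1`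
  set W1 := pullback (G.map q1) (adj.unit.app B) with hW1
  set f1 := pullback.fst (G.map q1) (adj.unit.app B) with hf1
  set s1 := pullback.snd (G.map q1) (adj.unit.app B) with hs1
  have S1 : IsPullback f1 s1 (G.map q1) (adj.unit.app B) := IsPullback.of_hasPullback _ _
  haveI i1 : IsIso (L.map f1) := hstable _ _ _ S1
  -- pullback of the unit of `A` along `f1 ≫ G q2`
  set m : W1 ⟶ G.obj (L.obj A) := f1 ≫ G.map q2 with hm
  set f2 := pullback.fst m (adj.unit.app A) with hf2
  set s2 := pullback.snd m (adj.unit.app A) with hs2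
  have S2 : IsPullback f2 s2 m (adj.unit.app A) := IsPullback.of_hasPullback _ _
  haveI i2 : IsIso (L.map f2) := hstable _ _ _ S2
  -- paste: `W1` is the pullback of `g` and `G p'`
  have T : IsPullback s1 m g (G.map p') := by
    have := S1.flip.paste_vert S0G
    rwa [hg] at this
  -- paste: `W2` is the pullback of `g` and `p`
  have big : IsPullback (f2 ≫ s1) s2 g p := by
    have := S2.paste_horiz T
    rwa [hp] at this
  -- compare with the chosen pullback of `g` and `p`
  -- the composite iso `L W2 ≅ Q`
  set u : L.obj (pullback m (adj.unit.app A)) ⟶ Q :=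
    L.map f2 ≫ L.map f1 ≫ adj.counit.app Q with hu
  haveI : IsIso u := by rw [hu]; infer_instance
  have hu1 : u ≫ q1 = L.map (f2 ≫ s1) := by
    rw [hu, Category.assoc, Category.assoc, ← adj.counit_naturality q1]
    have : f1 ≫ G.map q1 = s1 ≫ adj.unit.app B := S1.w
    simp only [Functor.comp_map, ← Category.assoc, ← L.map_comp, this]
    simp [adj.left_triangle_components]
  have hu2 : u ≫ q2 = L.map s2 := by
    have h2' : (f2 ≫ f1) ≫ G.map q2 = s2 ≫ adj.unit.app A := by
      rw [Category.assoc, ← hm, S2.w]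
    rw [hu, Category.assoc, Category.assoc, ← adj.counit_naturality q2]
    simp only [← Category.assoc, ← L.map_comp]
    rw [h2']
    simp [adj.left_triangle_components]
  -- transfer the pullback square in `C` along `u`
  have pbC : IsPullback (L.map (f2 ≫ s1)) (L.map s2) g' p' :=
    S0.of_iso (asIso u).symm (Iso.refl _) (Iso.refl _) (Iso.refl _)
      (by simp [← hu1]) (by simp [← hu2]) (by simp) (by simp)
  -- transfer the cospan from `(g', p')` to `(L g, L p)` along the counit iso
  have pbC2 : IsPullback (L.map (f2 ≫ s1)) (L.map s2) (L.map g) (L.map p) :=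
    pbC.of_iso (Iso.refl _) (Iso.refl _) (Iso.refl _) (asIso (adj.counit.app Z)).symm
      (by simp) (by simp) (by simp [hg2]) (by simp [hp2])
  have key : L.map big.isoPullback.hom ≫ pullbackComparison L g p = pbC2.isoPullback.hom := by
    apply pullback.hom_ext
    · rw [Category.assoc, pullbackComparison_comp_fst, ← L.map_comp,
        big.isoPullback_hom_fst, pbC2.isoPullback_hom_fst]
    · rw [Category.assoc, pullbackComparison_comp_snd, ← L.map_comp,
        big.isoPullback_hom_snd, pbC2.isoPullback_hom_snd]
  haveI : IsIso (L.map big.isoPullback.hom) := inferInstance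
  have : pullbackComparison L g p = inv (L.map big.isoPullback.hom) ≫ pbC2.isoPullback.hom := by
    rw [← key, IsIso.inv_hom_id_assoc]
  rw [this]
  infer_instance
end

section
/- Let L : P → C be a locally cartesian reflective localization of a locally cartesian closed category P, with fully faithful inclusion G. Then for every object T of P, the induced functor C/LT → P/T (pullback along the unit η_T of the inclusion of a local slice) is injective on isomorphism classes; consequently, if p : X → S is a map in C such that for every T in C the map Hom_C(T, S) → {iso classes of objects of C/T}, f ↦ [f*p], is injective, then for every T in P the map Hom_P(T, S) → {iso classes of objects of P/T}, f ↦ [f*p], is also injective. -/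
open CategoryTheory CategoryTheory.Limits

/-
A local object over `L T` is recovered from its pullback along `η_T`: applying `L` to the
projection `η_T^*(G a) → G a` gives an isomorphism, since `L η_T` is invertible and
`L`-isomorphisms into local objects are stable under pullback along maps of local objects.
Hence the slice functor `C/LT ⥤ P/T` has a left inverse on objects up to isomorphism.
For univalence, every `f : T ⟶ G S` factors as `η_T ≫ G f'`, and since `G` preserves
pullbacks, `f^*(G p) ≅ η_T^*(G (f'^* p))`; so `f^*(G p) ≅ g^*(G p)` forces `f'^* p ≅ g'^* p`.
-/

namespace CategoryTheory

variable {P C : Type*} [Category P] [Category C]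

def IsLocallyCartesian (L : P ⥤ C) (G : C ⥤ P) : Prop :=
  ∀ {T S : C} (f : T ⟶ S) {X Y : P} (p : X ⟶ G.obj S) (p' : Y ⟶ G.obj T) (q : Y ⟶ X),
    IsPullback q p' p (G.map f) → IsIso (L.map p) → IsIso (L.map p')

def IsUnivalent [HasPullbacks C] {X S : C} (p : X ⟶ S) : Prop :=
  ∀ (T : C) (f g : T ⟶ S),
    Nonempty (Over.mk (pullback.snd p f) ≅ Over.mk (pullback.snd p g)) → f = g

variable [HasPullbacks P]

noncomputable def Over.pullbackCompPostIso (G : C ⥤ P) {X S T' : C} (p : X ⟶ S) (f : T' ⟶ S)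
    [HasPullback p f] [PreservesLimit (cospan p f) G] {T : P} (u : T ⟶ G.obj T') :
    Over.mk (pullback.snd (G.map p) (u ≫ G.map f)) ≅
      (Over.pullback u).obj ((Over.post G).obj (Over.mk (pullback.snd p f))) :=
  (Over.pullbackComp u (G.map f)).app (Over.mk (G.map p)) ≪≫
    (Over.pullback u).mapIso
      (Over.isoMk (PreservesPullback.iso G p f).symm (PreservesPullback.iso_inv_snd G p f))

namespace Adjunction

variable {L : P ⥤ C} {G : C ⥤ P}

theorem map_pullback_fst_comp_counit_comp (adj : L ⊣ G) {T : P} (a : Over (L.obj T)) :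
    (L.map (pullback.fst (G.map a.hom) (adj.unit.app T)) ≫ adj.counit.app a.left) ≫ a.hom =
      L.map (pullback.snd (G.map a.hom) (adj.unit.app T)) := by
  have hε : L.map (G.map a.hom) ≫ adj.counit.app (L.obj T) = adj.counit.app a.left ≫ a.hom :=
    adj.counit_naturality a.hom
  rw [Category.assoc, ← hε, ← L.map_comp_assoc, pullback.condition, L.map_comp_assoc]
  simp

variable [G.Full] [G.Faithful]

noncomputable def postPullbackUnitIso (adj : L ⊣ G) {T : P} (a : Over (L.obj T))
    [IsIso (L.map (pullback.fst (G.map a.hom) (adj.unit.app T)))] :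
    (Over.post L).obj ((Over.post G ⋙ Over.pullback (adj.unit.app T)).obj a) ≅ a :=
  -- The ascription states the object with the `HasPullbacks P` instance, which the `IsIso`
  -- instance argument mentions, rather than with the one `Over.pullback` uses.
  Over.isoMk ((asIso (L.map (pullback.fst (G.map a.hom) (adj.unit.app T))) ≪≫
      asIso (adj.counit.app a.left) : L.obj (pullback (G.map a.hom) (adj.unit.app T)) ≅ a.left))
    (adj.map_pullback_fst_comp_counit_comp a)

theorem nonempty_iso_of_nonempty_iso_pullback_unit (adj : L ⊣ G) (hloc : IsLocallyCartesian L G)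
    {T : P} {a b : Over (L.obj T)}
    (h : Nonempty ((Over.post G ⋙ Over.pullback (adj.unit.app T)).obj a ≅
      (Over.post G ⋙ Over.pullback (adj.unit.app T)).obj b)) :
    Nonempty (a ≅ b) := by
  have (c : Over (L.obj T)) : IsIso (L.map (pullback.fst (G.map c.hom) (adj.unit.app T))) :=
    hloc c.hom _ _ _ (IsPullback.of_hasPullback _ _).flip inferInstance
  obtain ⟨i⟩ := h
  exact ⟨(adj.postPullbackUnitIso a).symm ≪≫ (Over.post L).mapIso i ≪≫ adj.postPullbackUnitIso b⟩

theorem isUnivalent_map [HasPullbacks C] (adj : L ⊣ G) (hloc : IsLocallyCartesian L G)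
    {X S : C} {p : X ⟶ S} (hp : IsUnivalent p) : IsUnivalent (G.map p) := by
  intro T f g h
  have := adj.rightAdjoint_preservesLimits
  obtain ⟨f', rfl⟩ := (adj.homEquiv T S).surjective f
  obtain ⟨g', rfl⟩ := (adj.homEquiv T S).surjective g
  rw [homEquiv_unit, homEquiv_unit] at h ⊢
  obtain ⟨i⟩ := h
  rw [hp _ f' g' <| adj.nonempty_iso_of_nonempty_iso_pullback_unit hloc
    ⟨(Over.pullbackCompPostIso G p f' _).symm ≪≫ i ≪≫ Over.pullbackCompPostIso G p g' _⟩]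

end Adjunction

end CategoryTheory

/-- Let `L : P ⥤ C` be a locally cartesian reflective localization (fully faithful inclusion
`G`, unit `η`) of a locally cartesian closed category `P`.  Then (1) for every `T : P` the
induced functor `C/LT ⥤ P/T` (inclusion on slices followed by pullback along `η_T`) is
injective on isomorphism classes; and (2) if `p : X ⟶ S` in `C` is univalent in `C` (for
every `T : C`, `f ↦ [f^*p]` is injective from `Hom_C(T, S)` to isomorphism classes of
`C/T`), then `p` is univalent in `P` (for every `T : P`, `f ↦ [f^*(Gp)]` is injective from
`Hom_P(T, GS)` to isomorphism classes of `P/T`). -/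
theorem univalent_of_loc_cartesian_localization
    {P C : Type*} [Category P] [Category C] [HasPullbacks P] [HasPullbacks C]
    (L : P ⥤ C) (G : C ⥤ P) (adj : L ⊣ G) [G.Full] [G.Faithful]
    (hloc : ∀ {T S : C} (f : T ⟶ S) {X Y : P}
      (p : X ⟶ G.obj S) (p' : Y ⟶ G.obj T) (q : Y ⟶ X),
      IsPullback q p' p (G.map f) → IsIso (L.map p) → IsIso (L.map p')) :
    (∀ (T : P) (a b : Over (L.obj T)),
      Nonempty ((Over.post G ⋙ Over.pullback (adj.unit.app T)).obj a ≅
        (Over.post G ⋙ Over.pullback (adj.unit.app T)).obj b) → Nonempty (a ≅ b)) ∧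
    (∀ {X S : C} (p : X ⟶ S),
      (∀ (T : C) (f g : T ⟶ S),
        Nonempty (Over.mk (pullback.snd p f) ≅ Over.mk (pullback.snd p g)) → f = g) →
      ∀ (T : P) (f g : T ⟶ G.obj S),
        Nonempty (Over.mk (pullback.snd (G.map p) f) ≅ Over.mk (pullback.snd (G.map p) g)) →
          f = g) :=
  ⟨fun _ _ _ => adj.nonempty_iso_of_nonempty_iso_pullback_unit hloc,
    fun _ hp => adj.isUnivalent_map hloc hp⟩
end
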